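/- Let T = (T₁,T₂) be a commuting pair on a Hilbert space H with vanishing defect operator I − T₁*T₁ − T₂*T₂ + T₁*T₂*T₁T₂ = 0, and let f₀ be a vector in a wandering subspace for T. Then for all nonnegative integers m, n: ‖T₁^m T₂^n f₀‖² = ‖T₁^m f₀‖² + ‖T₂^n f₀‖² − ‖f₀‖². -/

import Mathlib

open ContinuousLinearMap

variable {H : Type*} [NormedAddCommGroup H] [InnerProductSpace ℂ H] [CompleteSpace H]

/-- A subspace `W` is wandering for the pair `(T1, T2)` if
`T1^a W ⟂ T1^{b1} T2^{b2} W` whenever `b2 ≠ 0`, and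
`T2^a W ⟂ T1^{b1} T2^{b2} W` whenever `b1 ≠ 0`. -/
def IsWandering (T1 T2 : H →L[ℂ] H) (W : Submodule ℂ H) : Prop :=
  ∀ f ∈ W, ∀ g ∈ W, ∀ a b1 b2 : ℕ,
    (b2 ≠ 0 → (inner ℂ ((T1 ^ a) f) ((T1 ^ b1 * T2 ^ b2) g) : ℂ) = 0) ∧
    (b1 ≠ 0 → (inner ℂ ((T2 ^ a) f) ((T1 ^ b1 * T2 ^ b2) g) : ℂ) = 0)

private lemma genL1 {A : Type*} [Ring A] (a b c d : A)
    (h0 : d * c * a * b = c * a + d * b - 1) :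
    ∀ n : ℕ, d ^ n * c * a * b ^ n = c * a + d ^ n * b ^ n - 1 := by
  intro n
  induction n with
  | zero => simp
  | succ n ih =>
    calc d ^ (n + 1) * c * a * b ^ (n + 1)
        = d * (d ^ n * c * a * b ^ n) * b := by
          rw [pow_succ' d, pow_succ b]; noncomm_ring
      _ = d * (c * a + d ^ n * b ^ n - 1) * b := by rw [ih]
      _ = d * c * a * b + (d * d ^ n) * (b ^ n * b) - d * b := by noncomm_ring
      _ = (c * a + d * b - 1) + d ^ (n + 1) * b ^ (n + 1) - d * b := by
          rw [h0, ← pow_succ' d, ← pow_succ b]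
      _ = c * a + d ^ (n + 1) * b ^ (n + 1) - 1 := by abel

private lemma genL2 {A : Type*} [Ring A] (a b c d : A)
    (hab : a * b = b * a) (hcd : c * d = d * c)
    (h0 : d * c * a * b = c * a + d * b - 1) :
    ∀ m n : ℕ, d ^ n * c ^ m * a ^ m * b ^ n = c ^ m * a ^ m + d ^ n * b ^ n - 1 := by
  intro m n
  have e1 : Commute c (d ^ n) := Commute.pow_right hcd n
  have e2 : Commute a (b ^ n) := Commute.pow_right hab n
  induction m with
  | zero => simp
  | succ m ih =>
    have hC : Commute c (d ^ n * c ^ m) := e1.mul_right ((Commute.refl c).pow_right m)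
    have hA : Commute a (a ^ m * b ^ n) := ((Commute.refl a).pow_right m).mul_right e2
    calc d ^ n * c ^ (m + 1) * a ^ (m + 1) * b ^ n
        = ((d ^ n * c ^ m) * c) * (a * (a ^ m * b ^ n)) := by
          rw [pow_succ c m, pow_succ' a m]; noncomm_ring
      _ = (c * (d ^ n * c ^ m)) * ((a ^ m * b ^ n) * a) := by rw [← hC.eq, hA.eq]
      _ = c * (d ^ n * c ^ m * a ^ m * b ^ n) * a := by noncomm_ring
      _ = c * (c ^ m * a ^ m + d ^ n * b ^ n - 1) * a := by rw [ih]
      _ = (c * c ^ m) * (a ^ m * a) + (c * d ^ n) * (b ^ n * a) - c * a := by noncomm_ring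
      _ = c ^ (m + 1) * a ^ (m + 1) + (d ^ n * c) * (a * b ^ n) - c * a := by
          rw [← pow_succ' c, ← pow_succ a, e1.eq, ← e2.eq]
      _ = c ^ (m + 1) * a ^ (m + 1) + (d ^ n * c * a * b ^ n) - c * a := by noncomm_ring
      _ = c ^ (m + 1) * a ^ (m + 1) + (c * a + d ^ n * b ^ n - 1) - c * a := by
          rw [genL1 a b c d h0]
      _ = c ^ (m + 1) * a ^ (m + 1) + d ^ n * b ^ n - 1 := by abel

theorem stmt13 (T1 T2 : H →L[ℂ] H) (hcomm : T1 * T2 = T2 * T1)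
    (W : Submodule ℂ H) (hW : IsWandering T1 T2 W) (f0 : H) (hf0 : f0 ∈ W)
    (hdef : (1 : H →L[ℂ] H) - adjoint T1 * T1 - adjoint T2 * T2
      + adjoint T1 * (adjoint T2 * (T1 * T2)) = 0)
    (m n : ℕ) :
    ‖(T1 ^ m) ((T2 ^ n) f0)‖ ^ 2 = ‖(T1 ^ m) f0‖ ^ 2 + ‖(T2 ^ n) f0‖ ^ 2 - ‖f0‖ ^ 2 := by
  set a := T1
  set b := T2
  set c := star T1 with hc
  set d := star T2 with hd
  rw [← star_eq_adjoint, ← star_eq_adjoint] at hdef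
  have hcd : c * d = d * c := by
    rw [hc, hd, ← star_mul, ← star_mul, hcomm]
  have h1 : c * (d * (a * b)) = c * a + d * b - 1 := by
    rw [← sub_eq_zero, ← hdef]; abel
  have h0 : d * c * a * b = c * a + d * b - 1 := by
    rw [show d * c = c * d from hcd.symm, mul_assoc, mul_assoc]; exact h1
  have hop : d ^ n * c ^ m * a ^ m * b ^ n = c ^ m * a ^ m + d ^ n * b ^ n - 1 :=
    genL2 a b c d hcomm hcd h0 m n
  have hinner := congrArg (fun X : H →L[ℂ] H => (inner ℂ f0 (X f0) : ℂ)) hop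
  simp only [hc, hd, ← star_pow, mul_apply_eq_comp, sub_apply, add_apply, one_apply_eq_self, inner_sub_right,
    inner_add_right] at hinner
  simp only [star_eq_adjoint, adjoint_inner_right, inner_self_eq_norm_sq_to_K] at hinner
  simp only [a, b, inner_self_eq_norm_sq_to_K] at hinner ⊢
  exact_mod_cast hinner
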